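/- arXiv:1511.09227 — 2 statements merged into one kernel-verified Lean document; each statement's English description precedes it below -/
import Mathlib

section
/- Let g : ℝ → ℝ be Lipschitz with compact support. Then ∫_ℝ g(x₂)² e^{-α|x₂| tan θ} sgn(x₂) dx₂ = (2 cot θ / α) ∫_ℝ g(x₂) g'(x₂) e^{-α|x₂| tan θ} dx₂, where g' is the almost-everywhere defined derivative of g and sgn is the sign function. -/
/-! Both sides come from Mathlib's integration by parts for Lipschitz functions, one of them
compactly supported (`LipschitzWith.integral_lineDeriv_mul_eq`), applied to `g²` and the
`β`-Lipschitz weight `e^{-β|x|}`, `β = α tan θ`, whose derivative off `0` is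
`-β e^{-β|x|} sgn x`; a.e. `(g²)' = 2 g g'`, and `2 / β = 2 cot θ / α`. -/

open Real MeasureTheory Set Filter
open scoped NNReal

/-- `F α t = ∫_{-∞}^t e^{-α|x|} dx`. -/
noncomputable def F (α t : ℝ) : ℝ := ∫ x in Iio t, exp (-α * |x|)

/-- The half-plane-like domain `Ω = {(x₁,x₂) : x₁ < x₂ tan θ}`. -/
def Omg (θ : ℝ) : Set (ℝ × ℝ) := {p | p.1 < p.2 * tan θ}

/-- The functional `R(g) = ∫ g'·(g'·F(x tanθ) − g·e^{-α|x|tanθ}·cot θ) dx`. -/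
noncomputable def Rfun (α θ : ℝ) (g : ℝ → ℝ) : ℝ :=
  ∫ x : ℝ, deriv g x *
    (deriv g x * F α (x * tan θ) - g x * exp (-α * |x| * tan θ) * cot θ)

/-- The quantity `Λ(θ)` from the upper bound for the lowest eigenvalue. -/
noncomputable def Lam (θ : ℝ) : ℝ :=
  3 * cos θ ^ 6 * ((2:ℝ) ^ (2 * cos θ ^ 2) - 1) ^ 2 /
    (2 * (1 + 2 * cos θ ^ 2) ^ 3 *
      (108 + 180 * cos θ ^ 2 - 132 * cos θ ^ 4 + 45 * cos θ ^ 6 - 5 * cos θ ^ 8))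

lemma LipschitzWith.mul_of_nnnorm_le {X R : Type*} [PseudoMetricSpace X] [SeminormedRing R]
    {f g : X → R} {Kf Kg Mf Mg : ℝ≥0} (hf : LipschitzWith Kf f) (hg : LipschitzWith Kg g)
    (hfM : ∀ x, ‖f x‖₊ ≤ Mf) (hgM : ∀ x, ‖g x‖₊ ≤ Mg) :
    LipschitzWith (Mf * Kg + Kf * Mg) fun x ↦ f x * g x := by
  refine LipschitzWith.of_dist_le_mul fun x y ↦ ?_
  have hsplit : f x * g x - f y * g y = f x * (g x - g y) + (f x - f y) * g y := by noncomm_ring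
  calc dist (f x * g x) (f y * g y)
      ≤ ‖f x‖ * ‖g x - g y‖ + ‖f x - f y‖ * ‖g y‖ := by
        rw [dist_eq_norm, hsplit]
        exact (norm_add_le _ _).trans (add_le_add (norm_mul_le _ _) (norm_mul_le _ _))
    _ ≤ Mf * (Kg * dist x y) + Kf * dist x y * Mg := by
        rw [← dist_eq_norm, ← dist_eq_norm]
        gcongr
        · exact hfM x
        · exact hg.dist_le_mul x y
        · exact hf.dist_le_mul x y
        · exact hgM y
    _ = ↑(Mf * Kg + Kf * Mg) * dist x y := by push_cast; ring

lemma lipschitzWith_exp_neg_mul_abs (β : ℝ≥0) :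
    LipschitzWith β fun x : ℝ ↦ exp (-β * |x|) := by
  have hexp : LipschitzOnWith β (fun t : ℝ ↦ exp (-β * t)) (Ici 0) := by
    refine (convex_Ici 0).lipschitzOnWith_of_nnnorm_deriv_le (fun t _ ↦ by fun_prop) fun t ht ↦ ?_
    have hle : exp (-β * t) ≤ 1 := exp_le_one_iff.mpr (by nlinarith [β.2, mem_Ici.mp ht])
    rw [((hasDerivAt_id' t).const_mul (-(β : ℝ))).exp.deriv, ← NNReal.coe_le_coe, coe_nnnorm,
      norm_mul, norm_of_nonneg (exp_pos _).le, mul_one, norm_neg, NNReal.norm_eq]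
    exact mul_le_of_le_one_left β.2 hle
  have habs : LipschitzWith 1 fun x : ℝ ↦ |x| := lipschitzWith_one_norm
  simpa [Function.comp_def] using lipschitzOnWith_univ.mp <|
    hexp.comp habs.lipschitzOnWith (fun x _ ↦ mem_Ici.mpr (abs_nonneg x))

lemma hasDerivAt_exp_neg_mul_abs (β : ℝ) {x : ℝ} (hx : x ≠ 0) :
    HasDerivAt (fun y ↦ exp (-β * |y|)) (-β * exp (-β * |x|) * Real.sign x) x := by
  rcases hx.lt_or_gt with hx | hx
  · convert ((hasDerivAt_abs_neg hx).const_mul (-β)).exp using 1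
    rw [Real.sign_of_neg hx]; ring
  · convert ((hasDerivAt_abs_pos hx).const_mul (-β)).exp using 1
    rw [Real.sign_of_pos hx]; ring

theorem integral_mul_exp_neg_mul_abs_mul_sign {β : ℝ} (hβ : 0 < β) {G : ℝ → ℝ} {K : ℝ≥0}
    (hG : LipschitzWith K G) (hGc : HasCompactSupport G) :
    ∫ x, G x * exp (-β * |x|) * Real.sign x = β⁻¹ * ∫ x, deriv G x * exp (-β * |x|) := by
  lift β to ℝ≥0 using hβ.le
  have hparts := (lipschitzWith_exp_neg_mul_abs β).integral_lineDeriv_mul_eq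
    (μ := volume) hG hGc 1
  have hweight_deriv : (fun x ↦ lineDeriv ℝ (fun y ↦ exp (-β * |y|)) x 1 * G x) =ᵐ[volume]
      fun x ↦ -(β : ℝ) * (G x * exp (-β * |x|) * Real.sign x) := by
    filter_upwards [Measure.ae_ne volume 0] with x hx
    rw [(hasDerivAt_exp_neg_mul_abs β hx).differentiableAt.lineDeriv_eq_fderiv,
      fderiv_apply_one_eq_deriv, (hasDerivAt_exp_neg_mul_abs β hx).deriv]
    ring
  have hG_deriv : (fun x ↦ lineDeriv ℝ G x (-1) * exp (-β * |x|)) =ᵐ[volume]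
      fun x ↦ -(deriv G x * exp (-β * |x|)) := by
    filter_upwards [hG.ae_differentiableAt (μ := volume)] with x hx
    rw [lineDeriv_neg, hx.lineDeriv_eq_fderiv, fderiv_apply_one_eq_deriv, neg_mul]
  rw [integral_congr_ae hweight_deriv, integral_congr_ae hG_deriv, integral_const_mul, integral_neg] at hparts
  rw [eq_inv_mul_iff_mul_eq₀ hβ.ne']
  linarith

/-- integration-by-parts identity for Lipschitz `g` with compact
support. -/
theorem integration_by_parts_sign (α θ : ℝ) (hα : 0 < α) (hθ : θ ∈ Ioo 0 (π/2))
    (g : ℝ → ℝ) (hlip : ∃ K, LipschitzWith K g) (hsupp : HasCompactSupport g) :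
    ∫ x : ℝ, g x ^ 2 * exp (-α * |x| * tan θ) * Real.sign x
      = (2 * cot θ / α) * ∫ x : ℝ, g x * deriv g x * exp (-α * |x| * tan θ) := by
  obtain ⟨K, hK⟩ := hlip
  obtain ⟨C, hC⟩ := hsupp.exists_bound_of_continuous hK.continuous
  have hbound : ∀ x, ‖g x‖₊ ≤ ‖C‖₊ := fun x ↦ (hC x).trans (le_abs_self C)
  have hsq : LipschitzWith (‖C‖₊ * K + K * ‖C‖₊) fun x ↦ g x ^ 2 := by
    simpa only [sq] using hK.mul_of_nnnorm_le hK hbound hbound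
  have hsq_supp : HasCompactSupport fun x ↦ g x ^ 2 :=
    hsupp.comp_left (g := fun t ↦ t ^ 2) (zero_pow two_ne_zero)
  have hderiv_sq : ∀ᵐ x, deriv (fun y ↦ g y ^ 2) x * exp (-(α * tan θ) * |x|)
      = 2 * (g x * deriv g x * exp (-(α * tan θ) * |x|)) := by
    filter_upwards [hK.ae_differentiableAt] with x hx
    rw [(hx.hasDerivAt.fun_pow 2).deriv]
    ring
  have htan : 0 < tan θ := tan_pos_of_pos_of_lt_pi_div_two hθ.1 hθ.2
  have hweight : ∀ x, -α * |x| * tan θ = -(α * tan θ) * |x| := fun x ↦ by ring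
  simp_rw [hweight]
  rw [integral_mul_exp_neg_mul_abs_mul_sign (mul_pos hα htan) hsq hsq_supp,
    integral_congr_ae hderiv_sq, integral_const_mul, ← tan_inv_eq_cot]
  field_simp
end

section
/- For every ρ ∈ (0, cot²θ), the function g_ρ(x₂) = F(x₂ tan θ)^ρ satisfies R(g_ρ) = ρ tan²θ (ρ − cot²θ) ∫_ℝ e^{-2α|x₂| tan θ} F(x₂ tan θ)^{2ρ−1} dx₂, the integral on the right-hand side is finite, and consequently R(g_ρ) < 0. -/
open Real MeasureTheory Set Filter

/-!
Since `F' = e^{-α|t|}`, the function `g_ρ` has derivative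
`ρ tan θ e^{-α|x| tan θ} F(x tan θ)^{ρ-1}`, and with `cot θ = (tan θ)⁻¹` the integrand of
`R(g_ρ)` is pointwise `ρ tan²θ (ρ - cot²θ) e^{-2α|x| tan θ} F(x tan θ)^{2ρ-1}`.
The bounds `e^{-α|t|}/α ≤ F(t) ≤ 2/α` dominate `e^{-2α|t|} F(t)^s` by a sum of two-sided
exponentials, integrable as soon as `s > -2`; here `s = 2ρ - 1 > -1`. The integrand is positive,
so the sign of `R(g_ρ)` is that of `ρ - cot²θ`.
-/

lemma integral_exp_neg_mul_abs {b : ℝ} (hb : 0 < b) : ∫ x : ℝ, exp (-b * |x|) = 2 / b := by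
  rw [integral_comp_abs (f := fun x => exp (-b * x)), integral_exp_mul_Ioi (neg_lt_zero.2 hb)]
  field_simp
  simp

lemma integrable_exp_neg_mul_abs {b : ℝ} (hb : 0 < b) :
    Integrable fun x : ℝ => exp (-b * |x|) :=
  Integrable.of_integral_ne_zero <| by rw [integral_exp_neg_mul_abs hb]; positivity

lemma Real.rpow_le_rpow_add_rpow_of_mem_Icc {a b x : ℝ} (ha : 0 < a) (hx : x ∈ Icc a b)
    (s : ℝ) : x ^ s ≤ a ^ s + b ^ s := by
  rcases le_total 0 s with hs | hs
  · linarith [rpow_le_rpow (ha.le.trans hx.1) hx.2 hs, rpow_nonneg ha.le s]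
  · linarith [rpow_le_rpow_of_nonpos ha hx.1 hs, rpow_nonneg ((ha.le.trans hx.1).trans hx.2) s]

lemma F_eq_setIntegral_Iic (α t : ℝ) : F α t = ∫ x in Iic t, exp (-α * |x|) :=
  setIntegral_congr_set Iio_ae_eq_Iic

lemma F_le {α : ℝ} (hα : 0 < α) (t : ℝ) : F α t ≤ 2 / α :=
  integral_exp_neg_mul_abs hα ▸ setIntegral_le_integral (integrable_exp_neg_mul_abs hα)
    (Eventually.of_forall fun _ => (exp_pos _).le)

lemma exp_neg_mul_abs_div_le_F {α : ℝ} (hα : 0 < α) (t : ℝ) :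
    exp (-α * |t|) / α ≤ F α t := by
  calc exp (-α * |t|) / α = ∫ x in Iic (-|t|), exp (α * x) := by
        rw [integral_exp_mul_Iic hα]; ring_nf
    _ = ∫ x in Iic (-|t|), exp (-α * |x|) := by
        refine setIntegral_congr_fun measurableSet_Iic fun x hx => ?_
        rw [abs_of_nonpos (hx.out.trans (neg_nonpos.2 (abs_nonneg t)))]; ring_nf
    _ ≤ ∫ x in Iic t, exp (-α * |x|) :=
        setIntegral_mono_set (integrable_exp_neg_mul_abs hα).integrableOn
          (Eventually.of_forall fun _ => (exp_pos _).le)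
          (Iic_subset_Iic.2 (neg_abs_le t)).eventuallyLE
    _ = F α t := (F_eq_setIntegral_Iic α t).symm

lemma F_pos {α : ℝ} (hα : 0 < α) (t : ℝ) : 0 < F α t :=
  (div_pos (exp_pos _) hα).trans_le (exp_neg_mul_abs_div_le_F hα t)

lemma hasDerivAt_F {α : ℝ} (hα : 0 < α) (t : ℝ) : HasDerivAt (F α) (exp (-α * |t|)) t := by
  have hint := integrable_exp_neg_mul_abs hα
  have hcont : Continuous fun x : ℝ => exp (-α * |x|) := by fun_prop
  have hF : F α = fun s => F α 0 + ∫ x in (0:ℝ)..s, exp (-α * |x|) := by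
    ext s
    rw [F_eq_setIntegral_Iic α, F_eq_setIntegral_Iic α,
      ← intervalIntegral.integral_Iic_sub_Iic hint.integrableOn hint.integrableOn]
    ring
  rw [hF]
  exact (intervalIntegral.integral_hasDerivAt_right hint.intervalIntegrable
    (hcont.stronglyMeasurableAtFilter _ _) hcont.continuousAt).const_add _

lemma continuous_F {α : ℝ} (hα : 0 < α) : Continuous (F α) :=
  continuous_iff_continuousAt.2 fun t => (hasDerivAt_F hα t).continuousAt

lemma integrable_exp_mul_abs_mul_F_rpow {α s : ℝ} (hα : 0 < α) (hs : -2 < s) :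
    Integrable fun t : ℝ => exp (-2 * α * |t|) * F α t ^ s := by
  have hdom : Integrable fun t : ℝ =>
      exp (-((2 + s) * α) * |t|) / α ^ s + (2 / α) ^ s * exp (-(2 * α) * |t|) :=
    ((integrable_exp_neg_mul_abs (by nlinarith)).div_const _).add
      ((integrable_exp_neg_mul_abs (by positivity)).const_mul _)
  have hmeas : Measurable fun t : ℝ => exp (-2 * α * |t|) * F α t ^ s :=
    (by fun_prop : Measurable fun t : ℝ => exp (-2 * α * |t|)).mul
      ((continuous_F hα).measurable.pow_const s)
  refine hdom.mono' hmeas.aestronglyMeasurable (Eventually.of_forall fun t => ?_)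
  have hF := rpow_le_rpow_add_rpow_of_mem_Icc (div_pos (exp_pos (-α * |t|)) hα)
    ⟨exp_neg_mul_abs_div_le_F hα t, F_le hα t⟩ s
  rw [norm_of_nonneg (mul_nonneg (exp_pos _).le (rpow_nonneg (F_pos hα t).le _))]
  calc exp (-2 * α * |t|) * F α t ^ s
      ≤ exp (-2 * α * |t|) * ((exp (-α * |t|) / α) ^ s + (2 / α) ^ s) :=
        mul_le_mul_of_nonneg_left hF (exp_pos _).le
    _ = exp (-((2 + s) * α) * |t|) / α ^ s + (2 / α) ^ s * exp (-(2 * α) * |t|) := by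
        rw [div_rpow (exp_pos _).le hα.le, ← exp_mul, mul_add, mul_div_assoc', ← exp_add]
        ring_nf

lemma integrable_exp_mul_abs_mul_F_comp_mul_rpow {α c s : ℝ} (hα : 0 < α) (hc : 0 < c)
    (hs : -2 < s) : Integrable fun x : ℝ => exp (-2 * α * |x| * c) * F α (x * c) ^ s := by
  refine ((integrable_exp_mul_abs_mul_F_rpow hα hs).comp_mul_right' hc.ne').congr
    (Eventually.of_forall fun x => ?_)
  simp only [abs_mul, abs_of_pos hc, mul_assoc]

lemma hasDerivAt_F_comp_mul_rpow {α c : ℝ} (hα : 0 < α) (hc : 0 ≤ c) (ρ x : ℝ) :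
    HasDerivAt (fun x => F α (x * c) ^ ρ)
      (exp (-α * |x| * c) * c * ρ * F α (x * c) ^ (ρ - 1)) x := by
  have h := ((hasDerivAt_F hα (x * c)).comp x (hasDerivAt_mul_const c)).rpow_const
    (p := ρ) (Or.inl (F_pos hα (x * c)).ne')
  rwa [abs_mul, abs_of_nonneg hc, ← mul_assoc] at h

lemma Rfun_F_comp_mul_tan_rpow {α θ : ℝ} (hα : 0 < α) (hT : 0 < tan θ) (ρ : ℝ) :
    Rfun α θ (fun x => F α (x * tan θ) ^ ρ) = ρ * tan θ ^ 2 * (ρ - cot θ ^ 2) *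
      ∫ x : ℝ, exp (-2 * α * |x| * tan θ) * F α (x * tan θ) ^ (2 * ρ - 1) := by
  rw [Rfun, ← integral_const_mul]
  congr 1 with x
  have hu := F_pos hα (x * tan θ)
  have hρ : F α (x * tan θ) ^ ρ = F α (x * tan θ) ^ (ρ - 1) * F α (x * tan θ) := by
    rw [← rpow_add_one hu.ne', sub_add_cancel]
  rw [(hasDerivAt_F_comp_mul_rpow hα hT.le ρ x).deriv, ← tan_inv_eq_cot,
    show 2 * ρ - 1 = (ρ - 1) + (ρ - 1) + 1 by ring, rpow_add_one hu.ne', rpow_add hu,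
    show -2 * α * |x| * tan θ = -α * |x| * tan θ + -α * |x| * tan θ by ring, exp_add, hρ]
  field_simp

lemma integral_exp_mul_abs_mul_F_comp_mul_rpow_pos {α c s : ℝ} (hα : 0 < α) (hc : 0 < c)
    (hs : -2 < s) : 0 < ∫ x : ℝ, exp (-2 * α * |x| * c) * F α (x * c) ^ s := by
  have hf (x : ℝ) : 0 < exp (-2 * α * |x| * c) * F α (x * c) ^ s :=
    mul_pos (exp_pos _) (rpow_pos_of_pos (F_pos hα _) _)
  have hcont : Continuous fun x : ℝ => exp (-2 * α * |x| * c) * F α (x * c) ^ s :=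
    (by fun_prop : Continuous fun x : ℝ => exp (-2 * α * |x| * c)).mul
      (((continuous_F hα).comp (continuous_mul_const c)).rpow_const
        fun _ => Or.inl (F_pos hα _).ne')
  exact integral_pos_of_integrable_nonneg_nonzero hcont
    (integrable_exp_mul_abs_mul_F_comp_mul_rpow hα hc hs) (fun x => (hf x).le) (hf 0).ne'

/-- value and negativity of `R(g_ρ)` for `g_ρ(x) = F(x tanθ)^ρ`,
`ρ ∈ (0, cot²θ)`. -/
theorem R_of_g_rho_neg (α θ : ℝ) (hα : 0 < α) (hθ : θ ∈ Ioo 0 (π/2))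
    (ρ : ℝ) (hρ : ρ ∈ Ioo 0 (cot θ ^ 2)) :
    Rfun α θ (fun x => F α (x * tan θ) ^ ρ)
        = ρ * tan θ ^ 2 * (ρ - cot θ ^ 2) *
          ∫ x : ℝ, exp (-2 * α * |x| * tan θ) * F α (x * tan θ) ^ (2 * ρ - 1)
    ∧ Integrable (fun x : ℝ => exp (-2 * α * |x| * tan θ) * F α (x * tan θ) ^ (2 * ρ - 1))
    ∧ Rfun α θ (fun x => F α (x * tan θ) ^ ρ) < 0 := by
  have hT : 0 < tan θ := tan_pos_of_pos_of_lt_pi_div_two hθ.1 hθ.2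
  have hs : -2 < 2 * ρ - 1 := by linarith [hρ.1]
  have hR := Rfun_F_comp_mul_tan_rpow hα hT ρ
  have hcoef : ρ * tan θ ^ 2 * (ρ - cot θ ^ 2) < 0 :=
    mul_neg_of_pos_of_neg (by have := hρ.1; positivity) (sub_neg.2 hρ.2)
  refine ⟨hR, integrable_exp_mul_abs_mul_F_comp_mul_rpow hα hT hs, ?_⟩
  rw [hR]
  exact mul_neg_of_neg_of_pos hcoef (integral_exp_mul_abs_mul_F_comp_mul_rpow_pos hα hT hs)
end
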